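/- Let p ≥ 1, L = (L₁,…,L_p) positive, f ∈ F^coord_{0,L}(ℝ^d), x₀ ∈ ℝ^d, and x_* a global minimizer of f with minimal value f_* = f(x_*). Define θ₀ = 1/p and θ_i = (√(θ_{i−1}⁴ + 4θ_{i−1}²) − θ_{i−1}²)/2 for i ≥ 1. For a block sequence σ ∈ {1,…,p}^N, define iterates x₀^σ = z₀^σ = x₀ and, for i = 1,…,N with ℓ = σ(i): y_{i−1}^σ = (1−θ_{i−1}) x_{i−1}^σ + θ_{i−1} z_{i−1}^σ; z_i^σ = z_{i−1}^σ − (1/(p θ_{i−1} L_ℓ)) U_ℓ ∇^{(ℓ)} f(y_{i−1}^σ); x_i^σ = y_{i−1}^σ + p θ_{i−1} (z_i^σ − z_{i−1}^σ). Then the uniform average over all block sequences satisfies p^{−N} Σ_{σ ∈ {1,…,p}^N} ( f(x_N^σ) − f_* ) ≤ (4p²/(N − 1 + 2p)²) · R², where R² = (1 − 1/p)(f(x₀) − f_*) + (1/2)‖x₀ − x_*‖_L². (This is the expected guarantee for N steps of random accelerated coordinate descent with step sizes 1/L_ℓ and uniformly sampled blocks.) -/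

import Mathlib

/-!
Along every block sequence `σ`, consider
`Eᵢ = (1 - θᵢ) / θᵢ² (f(xᵢ) - f_*) + (p² / 2) ‖zᵢ - x_*‖_L²`. Averaged over the block chosen at
step `i`, `Eᵢ₊₁` is at most `Eᵢ`: block smoothness makes the coordinate gradient step from `yᵢ`
decrease `f` by `‖∇⁽ˡ⁾ f(yᵢ)‖² / (2 L_ℓ)`, which cancels exactly the quadratic term produced by the
`z`-update, while the linear terms summed over the `p` blocks give the full gradient, to which
convexity is applied at `xᵢ` and at `x_*`. The recursion for `θ` is
`(1 - θᵢ₊₁) / θᵢ₊₁² = 1 / θᵢ²`, so the average of `E_N` dominates `(f(x_N) - f_*) / θ_{N-1}²`,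
while `E₀ = p² R²` and `1 / θᵢ ≥ p + i / 2`. For `N = 0` one uses instead
`f(x₀) - f_* ≤ (p / 2) ‖x₀ - x_*‖_L²`, Jensen's inequality for the `p` one-block moves away
from `x_*`.
-/

open RealInnerProductSpace

noncomputable section

/-- The `ℓ`-th block `ℝ^{d_ℓ}` of the decomposition `ℝ^d = ℝ^{d_1} × … × ℝ^{d_p}`. -/
abbrev Blk {p : ℕ} (d : Fin p → ℕ) (ℓ : Fin p) : Type := EuclideanSpace ℝ (Fin (d ℓ))

/-- The space `ℝ^d = ℝ^{d_1} × … × ℝ^{d_p}` with the Euclidean (ℓ²) norm. -/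
abbrev Sp {p : ℕ} (d : Fin p → ℕ) : Type := PiLp 2 (Blk d)

/-- The selection embedding `U_ℓ : ℝ^{d_ℓ} → ℝ^d` placing `h` in block `ℓ` and `0` elsewhere. -/
def inj {p : ℕ} (d : Fin p → ℕ) (ℓ : Fin p) (h : Blk d ℓ) : Sp d :=
  (WithLp.equiv 2 (∀ ℓ, Blk d ℓ)).symm (Pi.single ℓ h)

/-- Membership in the class `F^coord_{0,L}(ℝ^d)`: convex, differentiable, and for each block
`ℓ` the partial gradient `∇^{(ℓ)} f` is `L_ℓ`-Lipschitz along the block `ℓ`. -/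
def IsCoordSmooth {p : ℕ} (d : Fin p → ℕ) (L : Fin p → ℝ) (f : Sp d → ℝ) : Prop :=
  ConvexOn ℝ Set.univ f ∧ Differentiable ℝ f ∧
    ∀ (ℓ : Fin p) (x : Sp d) (h : Blk d ℓ),
      ‖gradient f (x + inj d ℓ h) ℓ - gradient f x ℓ‖ ≤ L ℓ * ‖h‖

open Set

section InnerProductSpace

variable {E : Type*} [NormedAddCommGroup E] [InnerProductSpace ℝ E] [CompleteSpace E]
  {f : E → ℝ}

theorem Differentiable.hasDerivAt_comp_add_smul (hf : Differentiable ℝ f) (a c : E) (t : ℝ) :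
    HasDerivAt (fun s : ℝ => f (a + s • c)) ⟪gradient f (a + t • c), c⟫ t := by
  have hline : HasDerivAt (fun s : ℝ => a + s • c) c t := by
    simpa using ((hasDerivAt_id t).smul_const c).const_add a
  simpa [InnerProductSpace.toDual_apply_apply, Function.comp_def] using
    (hf _).hasGradientAt.hasFDerivAt.comp_hasDerivAt t hline

theorem ConvexOn.sub_le_inner_gradient (hconv : ConvexOn ℝ univ f) (hf : Differentiable ℝ f)
    (a b : E) : f a - f b ≤ ⟪gradient f a, a - b⟫ := by
  have hline : ConvexOn ℝ univ (fun s : ℝ => f (a + s • (b - a))) := by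
    have hcomp : (fun s : ℝ => f (a + s • (b - a))) = f ∘ AffineMap.lineMap a b := by
      ext s
      simp [AffineMap.lineMap_apply, add_comm]
    simpa [hcomp] using hconv.comp_affineMap (AffineMap.lineMap a b)
  have hslope := hline.le_slope_of_hasDerivWithinAt_Ioi (mem_univ 0) (mem_univ 1) one_pos
    (hf.hasDerivAt_comp_add_smul a (b - a) 0).hasDerivWithinAt
  simp only [slope_def_field, zero_smul, add_zero, one_smul, add_sub_cancel, sub_zero,
    div_one] at hslope
  rw [← neg_sub b a, inner_neg_right]
  linarith

theorem Differentiable.le_add_inner_gradient_add {w c : E} {K : ℝ} (hf : Differentiable ℝ f)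
    (hK : ∀ t ∈ Ioo (0 : ℝ) 1, ⟪gradient f (w + t • c) - gradient f w, c⟫ ≤ K * t) :
    f (w + c) ≤ f w + ⟪gradient f w, c⟫ + K / 2 := by
  set G := ⟪gradient f w, c⟫
  have hderiv : ∀ t, HasDerivAt (fun s : ℝ => f (w + s • c) - s * G - K / 2 * s ^ 2)
      (⟪gradient f (w + t • c), c⟫ - G - K * t) t := by
    intro t
    refine (((hf.hasDerivAt_comp_add_smul w c t).sub ((hasDerivAt_id t).mul_const G)).sub
      ((hasDerivAt_pow 2 t).const_mul (K / 2))).congr_deriv ?_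
    norm_num
    ring
  have hanti := antitoneOn_of_hasDerivWithinAt_nonpos (convex_Icc (0 : ℝ) 1)
    (continuous_iff_continuousAt.2 fun t => (hderiv t).continuousAt).continuousOn
    (fun t _ => (hderiv t).hasDerivWithinAt)
    (fun t ht => by
      rw [interior_Icc] at ht
      have := hK t ht
      rw [inner_sub_left] at this
      linarith)
  have := hanti (left_mem_Icc.2 zero_le_one) (right_mem_Icc.2 zero_le_one) zero_le_one
  norm_num at this
  linarith

end InnerProductSpace

section Blocks

variable {p : ℕ} {d : Fin p → ℕ}

theorem inj_apply (ℓ : Fin p) (h : Blk d ℓ) (j : Fin p) : inj d ℓ h j = Pi.single ℓ h j := rfl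

theorem inj_smul (ℓ : Fin p) (c : ℝ) (h : Blk d ℓ) : inj d ℓ (c • h) = c • inj d ℓ h := by
  ext1 j
  simp [inj_apply, Pi.single_smul]

theorem inner_inj_left (ℓ : Fin p) (h : Blk d ℓ) (v : Sp d) : ⟪inj d ℓ h, v⟫ = ⟪h, v ℓ⟫ := by
  rw [PiLp.inner_apply, Fintype.sum_eq_single ℓ fun j hj => by simp [inj_apply, hj]]
  simp [inj_apply]

theorem sum_inj_apply (v : Sp d) : ∑ ℓ, inj d ℓ (v ℓ) = v := by
  ext1 j
  rw [WithLp.ofLp_sum, Finset.sum_apply, Fintype.sum_eq_single j fun ℓ hℓ => by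
    simp [inj_apply, Pi.single_eq_of_ne' hℓ]]
  simp [inj_apply]

/-- The squared weighted norm `‖v‖_L² = ∑ ℓ, L ℓ ‖v⁽ˡ⁾‖²`. -/
def blockNormSq (L : Fin p → ℝ) (v : Sp d) : ℝ := ∑ ℓ, L ℓ * ‖v ℓ‖ ^ 2

theorem blockNormSq_nonneg {L : Fin p → ℝ} (hL : ∀ ℓ, 0 ≤ L ℓ) (v : Sp d) :
    0 ≤ blockNormSq L v :=
  Finset.sum_nonneg fun ℓ _ => mul_nonneg (hL ℓ) (sq_nonneg _)

theorem blockNormSq_sub_smul_inj (L : Fin p → ℝ) (v : Sp d) (ℓ : Fin p) (c : ℝ)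
    (g : Blk d ℓ) :
    blockNormSq L (v - c • inj d ℓ g) =
      blockNormSq L v - 2 * c * L ℓ * ⟪g, v ℓ⟫ + c ^ 2 * L ℓ * ‖g‖ ^ 2 := by
  have hterm : ∀ j, L j * ‖(v - c • inj d ℓ g) j‖ ^ 2 = L j * ‖v j‖ ^ 2 +
      Pi.single (M := fun _ => ℝ) ℓ (-2 * c * L ℓ * ⟪g, v ℓ⟫ + c ^ 2 * L ℓ * ‖g‖ ^ 2) j := by
    intro j
    rcases eq_or_ne j ℓ with rfl | hj
    · simp only [PiLp.sub_apply, PiLp.smul_apply, inj_apply, Pi.single_eq_same]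
      rw [norm_sub_sq_real, norm_smul, real_inner_smul_right, real_inner_comm, Real.norm_eq_abs,
        mul_pow, sq_abs]
      ring
    · simp [inj_apply, Pi.single_eq_of_ne hj]
  simp only [blockNormSq, hterm, Finset.sum_add_distrib, Fintype.sum_pi_single']
  ring

end Blocks

namespace IsCoordSmooth

variable {p : ℕ} {d : Fin p → ℕ} {L : Fin p → ℝ} {f : Sp d → ℝ}

theorem le_add_inner_gradient_add_sq (hf : IsCoordSmooth d L f) (ℓ : Fin p) (w : Sp d)
    (h : Blk d ℓ) :
    f (w + inj d ℓ h) ≤ f w + ⟪gradient f w ℓ, h⟫ + L ℓ / 2 * ‖h‖ ^ 2 := by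
  have key := hf.2.1.le_add_inner_gradient_add (w := w) (c := inj d ℓ h) (K := L ℓ * ‖h‖ ^ 2)
    fun t ht => by
      rw [real_inner_comm, inner_inj_left, real_inner_comm, ← inj_smul]
      calc ⟪(gradient f (w + inj d ℓ (t • h)) - gradient f w) ℓ, h⟫
          ≤ ‖gradient f (w + inj d ℓ (t • h)) ℓ - gradient f w ℓ‖ * ‖h‖ :=
            real_inner_le_norm _ _
        _ ≤ L ℓ * ‖t • h‖ * ‖h‖ := by gcongr; exact hf.2.2 ℓ w (t • h)
        _ = L ℓ * ‖h‖ ^ 2 * t := by rw [norm_smul, Real.norm_of_nonneg ht.1.le]; ring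
  rw [real_inner_comm, inner_inj_left, real_inner_comm] at key
  linarith

theorem apply_gradient_step_le (hf : IsCoordSmooth d L f) (ℓ : Fin p) (w : Sp d) :
    f (w - (L ℓ)⁻¹ • inj d ℓ (gradient f w ℓ)) ≤ f w - (L ℓ)⁻¹ / 2 * ‖gradient f w ℓ‖ ^ 2 := by
  have key := hf.le_add_inner_gradient_add_sq ℓ w (-(L ℓ)⁻¹ • gradient f w ℓ)
  rw [inj_smul, neg_smul, ← sub_eq_add_neg, real_inner_smul_right, real_inner_self_eq_norm_sq,
    norm_smul, norm_neg, Real.norm_eq_abs, mul_pow, sq_abs] at key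
  have hL : L ℓ * ((L ℓ)⁻¹ ^ 2) = (L ℓ)⁻¹ := by
    simpa [sq, mul_assoc] using inv_mul_mul_self (L ℓ)⁻¹
  nlinarith [hL]

theorem sub_le_blockNormSq_of_isMinOn (hf : IsCoordSmooth d L f) (hp : 0 < p) {xstar : Sp d}
    (hmin : IsMinOn f univ xstar) (v : Sp d) :
    f v - f xstar ≤ p / 2 * blockNormSq L (v - xstar) := by
  have hp' : (p : ℝ) ≠ 0 := by positivity
  have hgrad : gradient f xstar = 0 := by
    simp [gradient, (hmin.isLocalMin Filter.univ_mem).fderiv_eq_zero]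
  set q : Fin p → Sp d := fun ℓ => xstar + inj d ℓ ((p : ℝ) • (v - xstar) ℓ)
  -- `v` is the average of the `p` points `q ℓ`, each differing from `xstar` in one block only
  have havg : ∑ ℓ, (p : ℝ)⁻¹ • q ℓ = v := by
    simp only [q, smul_add, inj_smul, smul_smul, inv_mul_cancel₀ hp', mul_inv_cancel₀ hp', one_smul,
      Finset.sum_add_distrib, sum_inj_apply, Finset.sum_const, Finset.card_univ,
      Fintype.card_fin, ← Nat.cast_smul_eq_nsmul ℝ]
    abel
  have hjensen : f v ≤ ∑ ℓ, (p : ℝ)⁻¹ • f (q ℓ) := by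
    conv_lhs => rw [← havg]
    refine hf.1.map_sum_le (fun _ _ => by positivity) ?_ fun _ _ => mem_univ _
    simp [hp']
  have hq : ∀ ℓ, f (q ℓ) ≤ f xstar + p ^ 2 / 2 * (L ℓ * ‖(v - xstar) ℓ‖ ^ 2) := by
    intro ℓ
    have := hf.le_add_inner_gradient_add_sq ℓ xstar ((p : ℝ) • (v - xstar) ℓ)
    rw [hgrad, norm_smul, Real.norm_natCast] at this
    simp only [PiLp.zero_apply, inner_zero_left, add_zero] at this
    linarith
  rw [sub_le_iff_le_add']
  calc f v ≤ ∑ ℓ, (p : ℝ)⁻¹ • f (q ℓ) := hjensen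
    _ ≤ ∑ ℓ, (p : ℝ)⁻¹ * (f xstar + p ^ 2 / 2 * (L ℓ * ‖(v - xstar) ℓ‖ ^ 2)) :=
        Finset.sum_le_sum fun ℓ _ => mul_le_mul_of_nonneg_left (hq ℓ) (by positivity)
    _ = f xstar + p / 2 * blockNormSq L (v - xstar) := by
        simp only [mul_add, Finset.sum_add_distrib, Finset.sum_const, Finset.card_univ,
          Fintype.card_fin, nsmul_eq_mul, mul_inv_cancel_left₀ hp', blockNormSq, Finset.mul_sum]
        congr 1
        refine Finset.sum_congr rfl fun ℓ _ => ?_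
        field_simp

theorem sub_le_accelerated_rate_zero (hf : IsCoordSmooth d L f) (hp : 0 < p) {xstar : Sp d}
    (hmin : IsMinOn f univ xstar) (v : Sp d) :
    f v - f xstar ≤ 4 * p ^ 2 / (2 * p - 1) ^ 2 *
      ((1 - 1 / p) * (f v - f xstar) + 1 / 2 * blockNormSq L (v - xstar)) := by
  have hp1 : (1 : ℝ) ≤ p := Nat.one_le_cast.2 hp
  have hquad := hf.sub_le_blockNormSq_of_isMinOn hp hmin v
  have hF : 0 ≤ f v - f xstar := sub_nonneg.2 (hmin (mem_univ v))
  have hD : 0 ≤ blockNormSq L (v - xstar) := by nlinarith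
  rw [div_mul_eq_mul_div, le_div_iff₀ (by nlinarith)]
  field_simp
  nlinarith

end IsCoordSmooth

section Theta

variable {θ : ℕ → ℝ}

theorem theta_succ_sq (hθ : ∀ i, θ (i + 1) = (√(θ i ^ 4 + 4 * θ i ^ 2) - θ i ^ 2) / 2) (i : ℕ) :
    θ (i + 1) ^ 2 = θ i ^ 2 * (1 - θ (i + 1)) := by
  have hsq := Real.sq_sqrt (by positivity : (0 : ℝ) ≤ θ i ^ 4 + 4 * θ i ^ 2)
  rw [hθ i]
  nlinarith [hsq]

theorem theta_succ_lt_one (hθ : ∀ i, θ (i + 1) = (√(θ i ^ 4 + 4 * θ i ^ 2) - θ i ^ 2) / 2)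
    (i : ℕ) : θ (i + 1) < 1 := by
  have hlt : √(θ i ^ 4 + 4 * θ i ^ 2) < θ i ^ 2 + 2 :=
    (Real.sqrt_lt' (by positivity)).2 (by nlinarith)
  rw [hθ i]
  linarith

theorem theta_pos (hθ : ∀ i, θ (i + 1) = (√(θ i ^ 4 + 4 * θ i ^ 2) - θ i ^ 2) / 2)
    (h0 : 0 < θ 0) (i : ℕ) : 0 < θ i := by
  induction i with
  | zero => exact h0
  | succ i ih =>
    have hlt : θ i ^ 2 < √(θ i ^ 4 + 4 * θ i ^ 2) :=
      Real.lt_sqrt_of_sq_lt (by nlinarith [pow_pos ih 2])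
    rw [hθ i]
    linarith

theorem theta_le_one (hθ : ∀ i, θ (i + 1) = (√(θ i ^ 4 + 4 * θ i ^ 2) - θ i ^ 2) / 2)
    (h0 : θ 0 ≤ 1) : ∀ i, θ i ≤ 1
  | 0 => h0
  | i + 1 => (theta_succ_lt_one hθ i).le

theorem one_sub_theta_succ_div_sq (hθ : ∀ i, θ (i + 1) = (√(θ i ^ 4 + 4 * θ i ^ 2) - θ i ^ 2) / 2)
    (h0 : 0 < θ 0) (i : ℕ) : (1 - θ (i + 1)) / θ (i + 1) ^ 2 = 1 / θ i ^ 2 := by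
  have hi := theta_pos hθ h0 i
  have hi' := theta_pos hθ h0 (i + 1)
  rw [div_eq_div_iff (by positivity) (by positivity), theta_succ_sq hθ i]
  ring

theorem one_div_theta_add_le (hθ : ∀ i, θ (i + 1) = (√(θ i ^ 4 + 4 * θ i ^ 2) - θ i ^ 2) / 2)
    (h0 : 0 < θ 0) (i : ℕ) : 1 / θ 0 + i / 2 ≤ 1 / θ i := by
  induction i with
  | zero => simp
  | succ i ih =>
    -- with `A = 1 / θ i` and `B = 1 / θ (i + 1) > 1`, the recursion reads `B ^ 2 - B = A ^ 2`
    have hA := one_div_pos.2 (theta_pos hθ h0 i)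
    have hB : 1 < 1 / θ (i + 1) :=
      (one_lt_div (theta_pos hθ h0 (i + 1))).2 (theta_succ_lt_one hθ i)
    have hrec : (1 / θ (i + 1)) ^ 2 - 1 / θ (i + 1) = (1 / θ i) ^ 2 := by
      rw [one_div_pow, one_div_pow, ← one_sub_theta_succ_div_sq hθ h0 i]
      field_simp
    push_cast
    nlinarith

theorem theta_le (hθ : ∀ i, θ (i + 1) = (√(θ i ^ 4 + 4 * θ i ^ 2) - θ i ^ 2) / 2)
    (h0 : 0 < θ 0) (i : ℕ) : θ i ≤ 2 / (i + 2 / θ 0) := by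
  have h := one_div_le_one_div_of_le (by positivity) (one_div_theta_add_le hθ h0 i)
  rw [one_div_one_div] at h
  refine h.trans_eq ?_
  have := h0.ne'
  field_simp
  ring

end Theta

section Step

variable {p : ℕ} {d : Fin p → ℕ}

/-- One step of accelerated coordinate descent along block `ℓ`, mapping `(x, z)` to `(x', z')`.
With `y = (1 - θ) x + θ z`, the update `x' = y + p θ (z' - z)` is the coordinate gradient step
`y - U_ℓ ∇⁽ˡ⁾ f(y) / L ℓ`. -/
def acdStep (L : Fin p → ℝ) (f : Sp d → ℝ) (θ : ℝ) (x z : Sp d) (ℓ : Fin p) : Sp d × Sp d :=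
  let y := (1 - θ) • x + θ • z
  (y - (L ℓ)⁻¹ • inj d ℓ (gradient f y ℓ), z - ((p : ℝ) * θ * L ℓ)⁻¹ • inj d ℓ (gradient f y ℓ))

/-- With `a = (1 - θᵢ) / θᵢ²`, the Lyapunov function of the method at step `i`. -/
def acdEnergy (L : Fin p → ℝ) (f : Sp d → ℝ) (xstar : Sp d) (a : ℝ) (xz : Sp d × Sp d) : ℝ :=
  a * (f xz.1 - f xstar) + p ^ 2 / 2 * blockNormSq L (xz.2 - xstar)

variable {L : Fin p → ℝ} {f : Sp d → ℝ}

theorem acdEnergy_nonneg (hL : ∀ ℓ, 0 ≤ L ℓ) {xstar : Sp d} (hmin : IsMinOn f univ xstar) {a : ℝ}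
    (ha : 0 ≤ a) (xz : Sp d × Sp d) : 0 ≤ acdEnergy L f xstar a xz :=
  add_nonneg (mul_nonneg ha (sub_nonneg.2 (hmin (mem_univ _))))
    (mul_nonneg (by positivity) (blockNormSq_nonneg hL _))

theorem acdEnergy_initial (hp : 0 < p) (xstar x₀ : Sp d) :
    acdEnergy L f xstar ((1 - 1 / p) / (1 / p) ^ 2) (x₀, x₀) =
      p ^ 2 * ((1 - 1 / p) * (f x₀ - f xstar) + 1 / 2 * blockNormSq L (x₀ - xstar)) := by
  have : (p : ℝ) ≠ 0 := by positivity
  rw [acdEnergy]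
  field_simp

theorem acdEnergy_acdStep_le (hL : ∀ ℓ, 0 < L ℓ) (hf : IsCoordSmooth d L f) (xstar : Sp d)
    {θ : ℝ} (hθ : 0 < θ) (x z : Sp d) (ℓ : Fin p) :
    acdEnergy L f xstar (1 / θ ^ 2) (acdStep L f θ x z ℓ) ≤
      1 / θ ^ 2 * (f ((1 - θ) • x + θ • z) - f xstar) + p ^ 2 / 2 * blockNormSq L (z - xstar) -
        p / θ * ⟪gradient f ((1 - θ) • x + θ • z) ℓ, (z - xstar) ℓ⟫ := by
  set y := (1 - θ) • x + θ • z
  set g := gradient f y ℓ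
  have hp : (p : ℝ) ≠ 0 := Nat.cast_ne_zero.2 ℓ.pos.ne'
  have hLℓ := (hL ℓ).ne'
  have hdesc := mul_le_mul_of_nonneg_left (hf.apply_gradient_step_le ℓ y)
    (by positivity : (0 : ℝ) ≤ 1 / θ ^ 2)
  -- for these step sizes the `‖g‖²` terms of the two components cancel
  have hdist : p ^ 2 / 2 * blockNormSq L (z - xstar - ((p : ℝ) * θ * L ℓ)⁻¹ • inj d ℓ g) =
      p ^ 2 / 2 * blockNormSq L (z - xstar) - p / θ * ⟪g, (z - xstar) ℓ⟫ +
        1 / θ ^ 2 * ((L ℓ)⁻¹ / 2 * ‖g‖ ^ 2) := by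
    rw [blockNormSq_sub_smul_inj]
    field_simp
  simp only [acdEnergy, acdStep]
  rw [sub_right_comm, hdist]
  linarith

theorem sum_acdEnergy_acdStep_le (hL : ∀ ℓ, 0 < L ℓ) (hf : IsCoordSmooth d L f) (xstar : Sp d)
    {θ : ℝ} (hθ0 : 0 < θ) (hθ1 : θ ≤ 1) (x z : Sp d) :
    ∑ ℓ, acdEnergy L f xstar (1 / θ ^ 2) (acdStep L f θ x z ℓ) ≤
      p * acdEnergy L f xstar ((1 - θ) / θ ^ 2) (x, z) := by
  set y := (1 - θ) • x + θ • z with hy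
  set g := gradient f y
  have hconv : θ * (f y - f xstar) + (1 - θ) * (f y - f x) ≤ θ * ⟪g, z - xstar⟫ := by
    have hcomb : θ • (z - xstar) = θ • (y - xstar) + (1 - θ) • (y - x) := by rw [hy]; module
    calc θ * (f y - f xstar) + (1 - θ) * (f y - f x)
        ≤ θ * ⟪g, y - xstar⟫ + (1 - θ) * ⟪g, y - x⟫ :=
          add_le_add (mul_le_mul_of_nonneg_left (hf.1.sub_le_inner_gradient hf.2.1 y xstar) hθ0.le)
            (mul_le_mul_of_nonneg_left (hf.1.sub_le_inner_gradient hf.2.1 y x) (by linarith))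
      _ = θ * ⟪g, z - xstar⟫ := by
          rw [← real_inner_smul_right, ← real_inner_smul_right, ← inner_add_right, ← hcomb,
            real_inner_smul_right]
  have hsum : ∑ ℓ, ⟪g ℓ, (z - xstar) ℓ⟫ = ⟪g, z - xstar⟫ := (PiLp.inner_apply _ _).symm
  calc ∑ ℓ, acdEnergy L f xstar (1 / θ ^ 2) (acdStep L f θ x z ℓ)
      ≤ ∑ ℓ, (1 / θ ^ 2 * (f y - f xstar) + p ^ 2 / 2 * blockNormSq L (z - xstar) -
          p / θ * ⟪g ℓ, (z - xstar) ℓ⟫) :=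
        Finset.sum_le_sum fun ℓ _ => acdEnergy_acdStep_le hL hf xstar hθ0 x z ℓ
    _ = p * (1 / θ ^ 2 * (f y - f xstar) + p ^ 2 / 2 * blockNormSq L (z - xstar)) -
          p / θ * ⟪g, z - xstar⟫ := by
        rw [Finset.sum_sub_distrib, ← Finset.mul_sum, hsum, Finset.sum_const, Finset.card_univ,
          Fintype.card_fin, nsmul_eq_mul]
    _ ≤ p * acdEnergy L f xstar ((1 - θ) / θ ^ 2) (x, z) := by
        have hgap : p * (1 / θ ^ 2 * (f y - f xstar) + p ^ 2 / 2 * blockNormSq L (z - xstar)) -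
            p / θ * ⟪g, z - xstar⟫ - p * acdEnergy L f xstar ((1 - θ) / θ ^ 2) (x, z) =
            p / θ ^ 2 * (θ * (f y - f xstar) + (1 - θ) * (f y - f x) - θ * ⟪g, z - xstar⟫) := by
          simp only [acdEnergy]
          field_simp
          ring
        have : p / θ ^ 2 * (θ * (f y - f xstar) + (1 - θ) * (f y - f x) - θ * ⟪g, z - xstar⟫)
            ≤ 0 := mul_nonpos_of_nonneg_of_nonpos (by positivity) (by linarith)
        linarith

end Step

theorem Fintype.sum_sum_update {ι α M : Type*} [DecidableEq ι] [Fintype ι] [Fintype α]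
    [AddCommMonoid M] (i : ι) (W : (ι → α) → M) :
    ∑ σ : ι → α, ∑ a, W (Function.update σ i a) = Fintype.card α • ∑ σ, W σ := by
  have hswap : Function.Involutive fun q : (ι → α) × α => (Function.update q.1 i q.2, q.1 i) :=
    fun q => Prod.ext (by simp) (by simp)
  have hb := Fintype.sum_bijective _ hswap.bijective
    (fun q : (ι → α) × α => W (Function.update q.1 i q.2)) (fun q => W q.1) fun _ => rfl
  simpa only [Fintype.sum_prod_type, Finset.sum_const, Finset.card_univ, ← Finset.smul_sum]
    using hb

section Run

variable {p : ℕ} {d : Fin p → ℕ} {N : ℕ}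

/-- `x σ` and `z σ` are the iterates of accelerated coordinate descent along the block
sequence `σ`; only their first `N + 1` terms are constrained. -/
structure IsACDRun (L : Fin p → ℝ) (f : Sp d → ℝ) (θ : ℕ → ℝ) (x₀ : Sp d)
    (x z : (Fin N → Fin p) → ℕ → Sp d) : Prop where
  x_zero : ∀ σ, x σ 0 = x₀
  z_zero : ∀ σ, z σ 0 = x₀
  succ : ∀ σ i (hi : i < N),
    (x σ (i + 1), z σ (i + 1)) = acdStep L f (θ i) (x σ i) (z σ i) (σ ⟨i, hi⟩)

namespace IsACDRun

variable {L : Fin p → ℝ} {f : Sp d → ℝ} {θ : ℕ → ℝ} {x₀ : Sp d}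
  {x z : (Fin N → Fin p) → ℕ → Sp d}

theorem of_iterates {y : (Fin N → Fin p) → ℕ → Sp d} (hθ : ∀ i, θ i ≠ 0)
    (hx0 : ∀ σ, x σ 0 = x₀) (hz0 : ∀ σ, z σ 0 = x₀)
    (hy : ∀ σ, ∀ i < N, y σ i = (1 - θ i) • x σ i + θ i • z σ i)
    (hz : ∀ σ : Fin N → Fin p, ∀ i : ℕ, ∀ hi : i < N, z σ (i + 1) = z σ i -
      ((p : ℝ) * θ i * L (σ ⟨i, hi⟩))⁻¹ • inj d (σ ⟨i, hi⟩) (gradient f (y σ i) (σ ⟨i, hi⟩)))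
    (hx : ∀ σ, ∀ i < N, x σ (i + 1) = y σ i + ((p : ℝ) * θ i) • (z σ (i + 1) - z σ i)) :
    IsACDRun L f θ x₀ x z where
  x_zero := hx0
  z_zero := hz0
  succ σ i hi := by
    have hp : (p : ℝ) ≠ 0 := Nat.cast_ne_zero.2 (σ ⟨i, hi⟩).pos.ne'
    rw [acdStep, hx σ i hi, hz σ i hi, ← hy σ i hi, sub_sub_cancel_left, smul_neg, smul_smul,
      mul_inv, mul_inv_cancel_left₀ (mul_ne_zero hp (hθ i)), ← sub_eq_add_neg]

theorem eq_of_forall_lt_eq (run : IsACDRun L f θ x₀ x z) {σ τ : Fin N → Fin p} {k : ℕ}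
    (hk : k ≤ N) (hστ : ∀ j : Fin N, (j : ℕ) < k → σ j = τ j) :
    (x σ k, z σ k) = (x τ k, z τ k) := by
  induction k with
  | zero => rw [run.x_zero, run.x_zero, run.z_zero, run.z_zero]
  | succ k ih =>
    obtain ⟨hx, hz⟩ := Prod.mk.inj (ih (by omega) fun j hj => hστ j (by omega))
    rw [run.succ σ k hk, run.succ τ k hk, hx, hz, hστ ⟨k, hk⟩ (by simp)]

theorem update_succ (run : IsACDRun L f θ x₀ x z) (σ : Fin N → Fin p) {i : ℕ} (hi : i < N)
    (ℓ : Fin p) :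
    (x (Function.update σ ⟨i, hi⟩ ℓ) (i + 1), z (Function.update σ ⟨i, hi⟩ ℓ) (i + 1)) =
      acdStep L f (θ i) (x σ i) (z σ i) ℓ := by
  obtain ⟨hx, hz⟩ := Prod.mk.inj <| run.eq_of_forall_lt_eq (σ := Function.update σ ⟨i, hi⟩ ℓ)
    (τ := σ) hi.le fun j hj => Function.update_of_ne (fun h => by simp [h] at hj) _ _
  rw [run.succ _ i hi, hx, hz, Function.update_self]

theorem sum_acdEnergy_succ_le (run : IsACDRun L f θ x₀ x z) (hp : 0 < p) (hL : ∀ ℓ, 0 < L ℓ)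
    (hf : IsCoordSmooth d L f) (xstar : Sp d) {i : ℕ} (hi : i < N) (hθ0 : 0 < θ i)
    (hθ1 : θ i ≤ 1) :
    ∑ σ, acdEnergy L f xstar (1 / θ i ^ 2) (x σ (i + 1), z σ (i + 1)) ≤
      ∑ σ, acdEnergy L f xstar ((1 - θ i) / θ i ^ 2) (x σ i, z σ i) := by
  have hresample := Fintype.sum_sum_update ⟨i, hi⟩
    fun σ => acdEnergy L f xstar (1 / θ i ^ 2) (x σ (i + 1), z σ (i + 1))
  simp only [run.update_succ, Fintype.card_fin, nsmul_eq_mul] at hresample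
  have hstep := Finset.sum_le_sum fun σ (_ : σ ∈ Finset.univ) =>
    sum_acdEnergy_acdStep_le hL hf xstar hθ0 hθ1 (x σ i) (z σ i)
  rw [hresample, ← Finset.mul_sum] at hstep
  exact le_of_mul_le_mul_left hstep (Nat.cast_pos.2 hp)

theorem sum_acdEnergy_le (run : IsACDRun L f θ x₀ x z) (hp : 0 < p) (hL : ∀ ℓ, 0 < L ℓ)
    (hf : IsCoordSmooth d L f) (xstar : Sp d) (hθ0 : ∀ i, 0 < θ i) (hθ1 : ∀ i, θ i ≤ 1)
    (hcoef : ∀ i, (1 - θ (i + 1)) / θ (i + 1) ^ 2 = 1 / θ i ^ 2) {k : ℕ} (hk : k ≤ N) :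
    ∑ σ, acdEnergy L f xstar ((1 - θ k) / θ k ^ 2) (x σ k, z σ k) ≤
      p ^ N * acdEnergy L f xstar ((1 - θ 0) / θ 0 ^ 2) (x₀, x₀) := by
  induction k with
  | zero =>
    simp [run.x_zero, run.z_zero, Finset.sum_const, Finset.card_univ]
  | succ k ih =>
    rw [hcoef k]
    exact (run.sum_acdEnergy_succ_le hp hL hf xstar hk (hθ0 k) (hθ1 k)).trans (ih (by omega))

theorem sum_sub_le (run : IsACDRun L f θ x₀ x z) (hp : 0 < p) (hL : ∀ ℓ, 0 < L ℓ)
    (hf : IsCoordSmooth d L f) (xstar : Sp d) (hθ0 : ∀ i, 0 < θ i) (hθ1 : ∀ i, θ i ≤ 1)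
    (hcoef : ∀ i, (1 - θ (i + 1)) / θ (i + 1) ^ 2 = 1 / θ i ^ 2) {i : ℕ} (hi : i < N) :
    ∑ σ, (f (x σ (i + 1)) - f xstar) ≤
      θ i ^ 2 * (p ^ N * acdEnergy L f xstar ((1 - θ 0) / θ 0 ^ 2) (x₀, x₀)) := by
  have hθi := hθ0 i
  have hlow : ∀ σ, 1 / θ i ^ 2 * (f (x σ (i + 1)) - f xstar) ≤
      acdEnergy L f xstar ((1 - θ (i + 1)) / θ (i + 1) ^ 2) (x σ (i + 1), z σ (i + 1)) := by
    intro σ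
    rw [acdEnergy, hcoef i, le_add_iff_nonneg_right]
    exact mul_nonneg (by positivity) (blockNormSq_nonneg (fun ℓ => (hL ℓ).le) _)
  have := (Finset.sum_le_sum fun σ _ => hlow σ).trans
    (run.sum_acdEnergy_le hp hL hf xstar hθ0 hθ1 hcoef hi)
  rwa [← Finset.mul_sum, one_div, inv_mul_le_iff₀ (by positivity)] at this

end IsACDRun

end Run

theorem racd_expected_accelerated_rate {p : ℕ} (hp : 0 < p) {d : Fin p → ℕ}
    (L : Fin p → ℝ) (hL : ∀ ℓ, 0 < L ℓ) (f : Sp d → ℝ) (hf : IsCoordSmooth d L f)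
    (x₀ xstar : Sp d) (hmin : IsMinOn f Set.univ xstar)
    (N : ℕ) (θ : ℕ → ℝ) (hθ0 : θ 0 = 1 / (p : ℝ))
    (hθ : ∀ i : ℕ, θ (i + 1) = (Real.sqrt (θ i ^ 4 + 4 * θ i ^ 2) - θ i ^ 2) / 2)
    -- for each block sequence `σ`, the iterates `x σ`, `z σ`, `y σ` of accelerated
    -- coordinate descent along `σ`, started at `x₀`, with step sizes `1/L_ℓ`
    (x z y : (Fin N → Fin p) → ℕ → Sp d)
    (hx0 : ∀ σ, x σ 0 = x₀) (hz0 : ∀ σ, z σ 0 = x₀)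
    (hy : ∀ σ, ∀ i < N, y σ i = (1 - θ i) • x σ i + θ i • z σ i)
    (hz : ∀ σ : Fin N → Fin p, ∀ i : ℕ, ∀ hi : i < N, z σ (i + 1) = z σ i -
      ((p : ℝ) * θ i * L (σ ⟨i, hi⟩))⁻¹ • inj d (σ ⟨i, hi⟩) (gradient f (y σ i) (σ ⟨i, hi⟩)))
    (hx : ∀ σ, ∀ i < N, x σ (i + 1) = y σ i + ((p : ℝ) * θ i) • (z σ (i + 1) - z σ i)) :
    ((p : ℝ) ^ N)⁻¹ * ∑ σ : Fin N → Fin p, (f (x σ N) - f xstar) ≤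
      4 * (p : ℝ) ^ 2 / ((N : ℝ) - 1 + 2 * (p : ℝ)) ^ 2 *
        ((1 - 1 / (p : ℝ)) * (f x₀ - f xstar) + 1 / 2 * ∑ ℓ, L ℓ * ‖x₀ ℓ - xstar ℓ‖ ^ 2) := by
  have hp1 : (1 : ℝ) ≤ p := Nat.one_le_cast.2 hp
  have hθpos := theta_pos hθ (by rw [hθ0]; positivity)
  have hθle := theta_le_one hθ (by rw [hθ0]; exact div_le_one_of_le₀ hp1 (by positivity))
  have run := IsACDRun.of_iterates (fun i => (hθpos i).ne') hx0 hz0 hy hz hx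
  cases N with
  | zero =>
    simpa [hx0, neg_add_eq_sub, blockNormSq] using hf.sub_le_accelerated_rate_zero hp hmin x₀
  | succ M =>
    have hsum := run.sum_sub_le hp hL hf xstar hθpos hθle
      (one_sub_theta_succ_div_sq hθ (hθpos 0)) M.lt_succ_self
    have hθM := theta_le hθ (hθpos 0) M
    have hE₀_nonneg := acdEnergy_nonneg (fun ℓ => (hL ℓ).le) hmin (f := f)
      (div_nonneg (sub_nonneg.2 (hθle 0)) (sq_nonneg (θ 0))) (x₀, x₀)
    set E₀ := acdEnergy L f xstar ((1 - θ 0) / θ 0 ^ 2) (x₀, x₀) with hE₀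
    rw [inv_mul_le_iff₀ (by positivity)]
    calc _ ≤ θ M ^ 2 * (p ^ (M + 1) * E₀) := hsum
      _ ≤ (2 / (M + 2 / θ 0)) ^ 2 * (p ^ (M + 1) * E₀) := by gcongr; exact (hθpos M).le
      _ = _ := by
        rw [hE₀, hθ0, acdEnergy_initial hp, Nat.cast_succ, add_sub_cancel_right]
        simp only [blockNormSq, PiLp.sub_apply]
        field_simp
        ring
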